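/- arXiv:2311.00222 — 2 statements merged into one kernel-verified Lean document; each statement's English description precedes it below -/
import Mathlib

section
/- For every optimal partition P* there exists a Nash equilibrium ŵ of the weight game with C(ŵ) = P*, i.e., P* i = {q | ŵ i q = 1} for every agent i. -/
open Finset Filter

noncomputable def fsMax (s : Finset ℝ) : ℝ := s.max.unbotD 0

noncomputable def fsMin (s : Finset ℝ) : ℝ := s.min.untopD 0

noncomputable def fsSubmax (s : Finset ℝ) : ℝ := fsMax (s.filter (fun x => x < fsMax s))

/-- Agent `i` is dominating for task `q`. -/
def Dominating {n m : ℕ} (f : Fin n → Fin m → ℝ) (i : Fin n) (q : Fin m) : Prop :=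
  ∀ j, f j q ≤ f i q

/-- `P` is a partition of the task set: pairwise disjoint with union everything. -/
def IsPartitionP {n m : ℕ} (P : Fin n → Finset (Fin m)) : Prop :=
  (∀ i j, i ≠ j → Disjoint (P i) (P j)) ∧ (∀ q, ∃ i, q ∈ P i)

/-- Value of a partition. -/
noncomputable def Jval {n m : ℕ} (f : Fin n → Fin m → ℝ) (P : Fin n → Finset (Fin m)) : ℝ :=
  ∑ i, ∑ q ∈ P i, f i q

/-- Optimal partition. -/
def IsOptimalPartition {n m : ℕ} (f : Fin n → Fin m → ℝ) (P : Fin n → Finset (Fin m)) : Prop :=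
  IsPartitionP P ∧ ∀ P', IsPartitionP P' → Jval f P' ≤ Jval f P

/-- Maximum of `g j` over all `j ≠ i` (0 if that set is empty). -/
noncomputable def maxErase {n : ℕ} (i : Fin n) (g : Fin n → ℝ) : ℝ :=
  fsMax ((Finset.univ.erase i).image g)

/-- Utility of agent `i` in the weight game. -/
noncomputable def Uutil {n m : ℕ} (f : Fin n → Fin m → ℝ) (w : Fin n → Fin m → ℝ)
    (i : Fin n) : ℝ :=
  ∑ q, (f i q * w i q - maxErase i (fun j => f j q * w j q) * w i q)

/-- All entries of the matrix lie in `[0,1]`. -/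
def InUnit {n m : ℕ} (w : Fin n → Fin m → ℝ) : Prop :=
  ∀ i q, w i q ∈ Set.Icc (0 : ℝ) 1

/-- Nash equilibrium of the weight game. -/
def IsNashW {n m : ℕ} (f : Fin n → Fin m → ℝ) (w : Fin n → Fin m → ℝ) : Prop :=
  ∀ i, ∀ w' : Fin m → ℝ, (∀ q, w' q ∈ Set.Icc (0 : ℝ) 1) →
    Uutil f (Function.update w i w') i ≤ Uutil f w i

/-!
Give each agent weight `1` on its own tasks of `P*` and `0` elsewhere. Agent `i`'s utility is a
sum over tasks of `(f i q - p q) * w i q`, where the price `p q` is the best competing bid, so a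
best response may be chosen task by task. On its own task the competitors bid `0`, so weight `1`
is best since `f i q ≥ 0`. On a task of another agent `j` the price is at least `f j q`, and
`f j q ≥ f i q` because otherwise moving `q` from `j` to `i` would improve `P*`; so weight `0` is
best.
-/

section Partition

variable {n m : ℕ}

def fiberPartition (σ : Fin m → Fin n) : Fin n → Finset (Fin m) :=
  fun i => univ.filter (σ · = i)

lemma mem_fiberPartition {σ : Fin m → Fin n} {i : Fin n} {q : Fin m} :
    q ∈ fiberPartition σ i ↔ σ q = i := by
  simp [fiberPartition]

lemma isPartitionP_fiberPartition (σ : Fin m → Fin n) : IsPartitionP (fiberPartition σ) :=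
  ⟨fun _ _ hij => disjoint_filter.2 fun _ _ hi hj => hij (hi.symm.trans hj),
    fun q => ⟨σ q, mem_fiberPartition.2 rfl⟩⟩

lemma jval_fiberPartition (f : Fin n → Fin m → ℝ) (σ : Fin m → Fin n) :
    Jval f (fiberPartition σ) = ∑ q, f (σ q) q := by
  rw [← sum_fiberwise univ σ (fun q => f (σ q) q)]
  refine sum_congr rfl fun i _ => sum_congr rfl fun q hq => ?_
  rw [mem_fiberPartition.1 hq]

lemma IsPartitionP.exists_eq_fiberPartition {P : Fin n → Finset (Fin m)} (hP : IsPartitionP P) :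
    ∃ σ, P = fiberPartition σ := by
  choose σ hσ using hP.2
  refine ⟨σ, funext fun i => ext fun q => ⟨fun hq => ?_, ?_⟩⟩
  · by_contra hne
    exact disjoint_left.1 (hP.1 _ _ (mt mem_fiberPartition.2 hne)) (hσ q) hq
  · intro hq
    rw [← mem_fiberPartition.1 hq]
    exact hσ q

lemma IsOptimalPartition.dominating {f : Fin n → Fin m → ℝ} {P : Fin n → Finset (Fin m)}
    (hopt : IsOptimalPartition f P) {i : Fin n} {q : Fin m} (hq : q ∈ P i) :
    Dominating f i q := by
  obtain ⟨σ, rfl⟩ := hopt.1.exists_eq_fiberPartition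
  intro j
  have hle := hopt.2 _ (isPartitionP_fiberPartition (Function.update σ q j))
  rw [jval_fiberPartition, jval_fiberPartition, ← add_sum_erase _ _ (mem_univ q),
    ← add_sum_erase _ _ (mem_univ q),
    sum_congr rfl fun x hx => by rw [Function.update_of_ne (ne_of_mem_erase hx)],
    Function.update_self, mem_fiberPartition.1 hq] at hle
  linarith

end Partition

section WeightGame

variable {n m : ℕ}

lemma le_fsMax {s : Finset ℝ} {x : ℝ} (hx : x ∈ s) : x ≤ fsMax s := by
  rw [fsMax, ← coe_max' ⟨x, hx⟩, WithBot.unbotD_coe]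
  exact le_max' s x hx

lemma fsMax_eq_zero {s : Finset ℝ} (hs : s ⊆ {0}) : fsMax s = 0 := by
  rcases subset_singleton_iff.1 hs with rfl | rfl <;> simp [fsMax]

lemma le_maxErase {i j : Fin n} (hj : j ≠ i) (g : Fin n → ℝ) : g j ≤ maxErase i g :=
  le_fsMax (mem_image_of_mem g (mem_erase.2 ⟨hj, mem_univ j⟩))

lemma maxErase_eq_zero {i : Fin n} {g : Fin n → ℝ} (hg : ∀ j ≠ i, g j = 0) :
    maxErase i g = 0 :=
  fsMax_eq_zero fun _ hx => by
    obtain ⟨j, hj, rfl⟩ := mem_image.1 hx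
    exact mem_singleton.2 (hg j (ne_of_mem_erase hj))

lemma maxErase_congr {i : Fin n} {g g' : Fin n → ℝ} (h : ∀ j ≠ i, g j = g' j) :
    maxErase i g = maxErase i g' := by
  unfold maxErase
  rw [image_congr fun j hj => h j (ne_of_mem_erase hj)]

lemma uutil_update_self (f w : Fin n → Fin m → ℝ) (i : Fin n) (w' : Fin m → ℝ) :
    Uutil f (Function.update w i w') i =
      ∑ q, (f i q - maxErase i (fun j => f j q * w j q)) * w' q := by
  refine sum_congr rfl fun q _ => ?_
  rw [maxErase_congr fun j hj => by rw [Function.update_of_ne hj], Function.update_self]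
  ring

lemma isNashW_of_forall_mul_le {f w : Fin n → Fin m → ℝ}
    (h : ∀ i q, ∀ x ∈ Set.Icc (0 : ℝ) 1,
      (f i q - maxErase i (fun j => f j q * w j q)) * x ≤
        (f i q - maxErase i (fun j => f j q * w j q)) * w i q) :
    IsNashW f w := by
  intro i w' hw'
  have hw : Uutil f w i = Uutil f (Function.update w i (w i)) i := by
    rw [Function.update_eq_self]
  rw [hw, uutil_update_self, uutil_update_self]
  exact sum_le_sum fun q _ => h i q (w' q) (hw' q)

def indicatorProfile (P : Fin n → Finset (Fin m)) : Fin n → Fin m → ℝ :=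
  fun i q => if q ∈ P i then 1 else 0

lemma indicatorProfile_of_mem {P : Fin n → Finset (Fin m)} {i : Fin n} {q : Fin m}
    (hq : q ∈ P i) : indicatorProfile P i q = 1 :=
  if_pos hq

lemma indicatorProfile_of_notMem {P : Fin n → Finset (Fin m)} {i : Fin n} {q : Fin m}
    (hq : q ∉ P i) : indicatorProfile P i q = 0 :=
  if_neg hq

lemma inUnit_indicatorProfile (P : Fin n → Finset (Fin m)) : InUnit (indicatorProfile P) := by
  intro i q
  by_cases hq : q ∈ P i <;> simp [indicatorProfile, hq]

lemma isNashW_indicatorProfile {f : Fin n → Fin m → ℝ} (hf : ∀ i q, 0 ≤ f i q)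
    {P : Fin n → Finset (Fin m)} (hopt : IsOptimalPartition f P) :
    IsNashW f (indicatorProfile P) := by
  refine isNashW_of_forall_mul_le fun i q x hx => ?_
  by_cases hq : q ∈ P i
  · have hprice : maxErase i (fun j => f j q * indicatorProfile P j q) = 0 :=
      maxErase_eq_zero fun j hj => by
        rw [indicatorProfile_of_notMem (disjoint_right.1 (hopt.1.1 j i hj) hq), mul_zero]
    rw [hprice, indicatorProfile_of_mem hq, sub_zero, mul_one]
    exact mul_le_of_le_one_right (hf i q) hx.2
  · obtain ⟨j, hqj⟩ := hopt.1.2 q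
    have hji : j ≠ i := by rintro rfl; exact hq hqj
    have hprice : f i q ≤ maxErase i (fun j => f j q * indicatorProfile P j q) := by
      have := le_maxErase hji (fun j => f j q * indicatorProfile P j q)
      rw [indicatorProfile_of_mem hqj, mul_one] at this
      exact (hopt.dominating hqj i).trans this
    rw [indicatorProfile_of_notMem hq, mul_zero]
    exact mul_nonpos_of_nonpos_of_nonneg (sub_nonpos.2 hprice) hx.1

end WeightGame

open Classical in
theorem optimal_partition_subset_nash_weight_general {n m : ℕ} (f : Fin n → Fin m → ℝ)
    (hf : ∀ i q, 0 ≤ f i q)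
    (Pstar : Fin n → Finset (Fin m)) (hopt : IsOptimalPartition f Pstar) :
    ∃ what : Fin n → Fin m → ℝ, InUnit what ∧ IsNashW f what ∧
      ∀ i, Pstar i = Finset.univ.filter (fun q => what i q = 1) := by
  refine ⟨indicatorProfile Pstar, inUnit_indicatorProfile Pstar,
    isNashW_indicatorProfile hf hopt, fun i => ?_⟩
  ext q
  by_cases hq : q ∈ Pstar i <;> simp [indicatorProfile, hq]

open Classical in
theorem optimal_partition_subset_nash_weight {n m : ℕ} (f : Fin n → Fin m → ℝ)
    (hf : ∀ i q, 0 ≤ f i q)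
    (hnt : ∀ q : Fin m, ∃ j : Fin n, ¬ Dominating f j q)
    (Pstar : Fin n → Finset (Fin m)) (hopt : IsOptimalPartition f Pstar) :
    ∃ what : Fin n → Fin m → ℝ, InUnit what ∧ IsNashW f what ∧
      ∀ i, Pstar i = Finset.univ.filter (fun q => what i q = 1) :=
  optimal_partition_subset_nash_weight_general f hf Pstar hopt
end

section
/- Suppose n ≥ 2 and agent i is dominating for task q. Then: (a) for every matrix w : Fin n → Fin m → ℝ with all entries in [0,1], f i q − max_{j ≠ i} (f j q * w j q) ≥ 0; and (b) along any PBRAG trajectory W, the sequence t ↦ W t i q is monotone nondecreasing and converges to a limit in [0,1]. -/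
open Finset Filter

noncomputable def clamp (x : ℝ) : ℝ := max 0 (min x 1)

/-- One step of the projected best-response ascending gradient dynamics. -/
noncomputable def pbrag {n m : ℕ} (f γ : Fin n → Fin m → ℝ)
    (w : Fin n → Fin m → ℝ) : Fin n → Fin m → ℝ :=
  fun i q => clamp (w i q + γ i q * (f i q - maxErase i (fun j => f j q * w j q)))

/-! Every competitor's weighted reward `f j q * w j q` is at most `f j q ≤ f i q`, so the gradient
term of a dominating agent is nonnegative. Since `clamp` is monotone and fixes `[0,1]`, the update
never decreases `W t i q`; a bounded monotone sequence converges, and `[0,1]` is closed. -/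

lemma fsMax_le {s : Finset ℝ} {b : ℝ} (hb : 0 ≤ b) (h : ∀ x ∈ s, x ≤ b) : fsMax s ≤ b := by
  unfold fsMax
  cases hs : s.max with
  | bot => simpa using hb
  | coe a => simpa using h a (Finset.mem_of_max hs)

lemma maxErase_le {n : ℕ} {i : Fin n} {g : Fin n → ℝ} {b : ℝ} (hb : 0 ≤ b)
    (h : ∀ j, j ≠ i → g j ≤ b) : maxErase i g ≤ b :=
  fsMax_le hb <| by
    simp only [Finset.mem_image, Finset.mem_erase, Finset.mem_univ, and_true]
    rintro _ ⟨j, hj, rfl⟩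
    exact h j hj

lemma Dominating.maxErase_le {n m : ℕ} {f : Fin n → Fin m → ℝ} (hf : ∀ i q, 0 ≤ f i q)
    {i : Fin n} {q : Fin m} (hdom : Dominating f i q) {w : Fin n → Fin m → ℝ} (hw : InUnit w) :
    maxErase i (fun j => f j q * w j q) ≤ f i q :=
  _root_.maxErase_le (hf i q) fun j _ =>
    (mul_le_of_le_one_right (hf j q) (hw j q).2).trans (hdom j)

lemma clamp_mem (x : ℝ) : clamp x ∈ Set.Icc (0 : ℝ) 1 :=
  ⟨le_max_left _ _, max_le zero_le_one (min_le_right _ _)⟩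

lemma clamp_of_mem {x : ℝ} (hx : x ∈ Set.Icc (0 : ℝ) 1) : clamp x = x := by
  rw [clamp, min_eq_left hx.2, max_eq_right hx.1]

lemma clamp_mono : Monotone clamp := fun _ _ hab =>
  max_le_max le_rfl (min_le_min hab le_rfl)

lemma inUnit_pbrag {n m : ℕ} (f γ w : Fin n → Fin m → ℝ) : InUnit (pbrag f γ w) :=
  fun _ _ => clamp_mem _

lemma le_pbrag {n m : ℕ} {f γ w : Fin n → Fin m → ℝ} {i : Fin n} {q : Fin m}
    (hw : w i q ∈ Set.Icc (0 : ℝ) 1) (hγ : 0 ≤ γ i q)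
    (hgain : 0 ≤ f i q - maxErase i (fun j => f j q * w j q)) :
    w i q ≤ pbrag f γ w i q :=
  calc w i q = clamp (w i q) := (clamp_of_mem hw).symm
    _ ≤ pbrag f γ w i q := clamp_mono (le_add_of_nonneg_right (mul_nonneg hγ hgain))

lemma inUnit_of_pbrag_trajectory {n m : ℕ} {f γ : Fin n → Fin m → ℝ}
    {W : ℕ → Fin n → Fin m → ℝ} (hW0 : InUnit (W 0)) (hWs : ∀ t, W (t + 1) = pbrag f γ (W t)) :
    ∀ t, InUnit (W t)
  | 0 => hW0
  | t + 1 => hWs t ▸ inUnit_pbrag f γ (W t)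

lemma Monotone.exists_tendsto_mem_Icc {u : ℕ → ℝ} {a b : ℝ} (hu : Monotone u)
    (hab : ∀ t, u t ∈ Set.Icc a b) : ∃ L ∈ Set.Icc a b, Tendsto u atTop (nhds L) := by
  have hlim := tendsto_atTop_ciSup hu ⟨b, by rintro _ ⟨t, rfl⟩; exact (hab t).2⟩
  exact ⟨_, isClosed_Icc.mem_of_tendsto hlim (Eventually.of_forall hab), hlim⟩

theorem pbrag_dominating_monotone_general {n m : ℕ} (f : Fin n → Fin m → ℝ)
    (hf : ∀ i q, 0 ≤ f i q)
    (γ : Fin n → Fin m → ℝ) (hγ : ∀ i q, 0 < γ i q)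
    (i : Fin n) (q : Fin m) (hdom : Dominating f i q)
    (W : ℕ → Fin n → Fin m → ℝ)
    (hW0 : InUnit (W 0)) (hWs : ∀ t, W (t + 1) = pbrag f γ (W t)) :
    (∀ w : Fin n → Fin m → ℝ, InUnit w →
        0 ≤ f i q - maxErase i (fun j => f j q * w j q)) ∧
      (Monotone (fun t => W t i q) ∧
        ∃ L ∈ Set.Icc (0 : ℝ) 1,
          Tendsto (fun t => W t i q) atTop (nhds L)) := by
  have hgain : ∀ w : Fin n → Fin m → ℝ, InUnit w →
      0 ≤ f i q - maxErase i (fun j => f j q * w j q) :=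
    fun w hw => sub_nonneg.mpr (hdom.maxErase_le hf hw)
  have hunit := inUnit_of_pbrag_trajectory hW0 hWs
  have hmono : Monotone (fun t => W t i q) := monotone_nat_of_le_succ fun t => by
    rw [hWs t]
    exact le_pbrag (hunit t i q) (hγ i q).le (hgain (W t) (hunit t))
  exact ⟨hgain, hmono, hmono.exists_tendsto_mem_Icc fun t => hunit t i q⟩

theorem pbrag_dominating_monotone {n m : ℕ} (hn : 2 ≤ n) (f : Fin n → Fin m → ℝ)
    (hf : ∀ i q, 0 ≤ f i q)
    (γ : Fin n → Fin m → ℝ) (hγ : ∀ i q, 0 < γ i q)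
    (i : Fin n) (q : Fin m) (hdom : Dominating f i q)
    (W : ℕ → Fin n → Fin m → ℝ)
    (hW0 : InUnit (W 0)) (hWs : ∀ t, W (t + 1) = pbrag f γ (W t)) :
    (∀ w : Fin n → Fin m → ℝ, InUnit w →
        0 ≤ f i q - maxErase i (fun j => f j q * w j q)) ∧
      (Monotone (fun t => W t i q) ∧
        ∃ L ∈ Set.Icc (0 : ℝ) 1,
          Tendsto (fun t => W t i q) atTop (nhds L)) :=
  pbrag_dominating_monotone_general f hf γ hγ i q hdom W hW0 hWs
end
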